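/- There exists a coherent commutative ring R and a multiplicative subset S of R such that the class of S-flat R-modules is not closed under direct products; concretely, for a valuation domain R with value group ℤ × ℤ (lexicographic), x of value (0,1), and S = {xⁱ : i ≥ 0}, each R/xⁱR is S-flat (indeed (R/xⁱR)_S = 0) but the product ∏_{i≥1} R/xⁱR is not S-flat. -/

import Mathlib

/-!
Valuation domains are Bézout, so a finitely generated ideal is principal, hence either zero or free
of rank one. Each `R/xⁱR` is killed by `xⁱ ∈ S`, so it localizes to zero. In the product, the
element `(1, 1, …)` is killed by `y` (every `xⁱ` divides `y`, as `v y = (1,0)` exceeds every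
`v xⁱ = (0,i)`), but by no power `xⁿ` (look at the coordinate `n`). So its image in the
localization is a nonzero element killed by the nonzero scalar `y`, while flat modules over the
domain `R_S` are torsion-free.
-/

/-- The lexicographic order on `ℤ × ℤ`. -/
def lexLe (a b : ℤ × ℤ) : Prop := a.1 < b.1 ∨ (a.1 = b.1 ∧ a.2 ≤ b.2)

theorem IsBezout.finitePresentation_of_fg {R : Type*} [CommRing R] [IsDomain R] [IsBezout R]
    {I : Ideal R} (hI : I.FG) : Module.FinitePresentation R I := by
  obtain ⟨a, rfl⟩ := (IsBezout.isPrincipal_of_FG I hI).principal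
  by_cases ha : a = 0
  · subst ha
    have : Subsingleton (R ∙ (0 : R)) := by
      rw [Submodule.span_singleton_eq_bot.mpr rfl]; infer_instance
    infer_instance
  · exact Module.FinitePresentation.of_equiv (LinearEquiv.toSpanNonzeroSingleton R R a ha)

namespace Ideal.Quotient

variable {R : Type*} [CommRing R]

theorem span_singleton_smul_eq_zero (a : R) (m : R ⧸ Ideal.span {a}) : a • m = 0 := by
  obtain ⟨r, rfl⟩ := Ideal.Quotient.mk_surjective m
  rw [Algebra.smul_def, Ideal.Quotient.algebraMap_eq, ← map_mul,
    Ideal.Quotient.eq_zero_iff_mem]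
  exact Ideal.mul_mem_right r _ (Ideal.mem_span_singleton_self a)

theorem smul_mk_one_eq_zero_iff {a b : R} :
    b • Ideal.Quotient.mk (Ideal.span {a}) 1 = 0 ↔ a ∣ b := by
  rw [Algebra.smul_def, Ideal.Quotient.algebraMap_eq, ← map_mul, mul_one,
    Ideal.Quotient.eq_zero_iff_mem, Ideal.mem_span_singleton]

end Ideal.Quotient

namespace LocalizedModule

variable {R M : Type*} [CommRing R] [AddCommGroup M] [Module R M] {S : Submonoid R}

theorem subsingleton_of_smul_eq_zero {s : R} (hs : s ∈ S) (h : ∀ m : M, s • m = 0) :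
    Subsingleton (LocalizedModule S M) :=
  subsingleton_iff.mpr fun m => ⟨s, hs, h m⟩

theorem not_flat_of_smul_eq_zero [IsDomain R] (hS : S ≤ nonZeroDivisors R) {r : R} (hr : r ≠ 0)
    {m : M} (hrm : r • m = 0) (hm : ∀ s ∈ S, s • m ≠ 0) :
    ¬ Module.Flat (Localization S) (LocalizedModule S M) := by
  intro hflat
  have : IsDomain (Localization S) := IsLocalization.isDomain_localization hS
  have hr' : algebraMap R (Localization S) r ∈ nonZeroDivisors (Localization S) :=
    mem_nonZeroDivisors_of_ne_zero <|
      IsLocalization.to_map_ne_zero_of_mem_nonZeroDivisors _ hS (mem_nonZeroDivisors_of_ne_zero hr)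
  have hkill : algebraMap R (Localization S) r • mk m (1 : S) =
      algebraMap R (Localization S) r • 0 := by
    rw [smul_zero, algebraMap_smul, smul'_mk, hrm, zero_mk]
  have hzero : mkLinearMap S M m = 0 := Module.Flat.isSMulRegular_of_nonZeroDivisors hr' hkill
  obtain ⟨s, hs, hsm⟩ := mem_ker_mkLinearMap_iff.mp hzero
  exact hm s hs hsm

end LocalizedModule

theorem map_pow_of_map_mul {R G : Type*} [CommRing R] [IsDomain R] [AddCommGroup G] {v : R → G}
    (hmul : ∀ a b : R, a ≠ 0 → b ≠ 0 → v (a * b) = v a + v b) {x : R} (hx : x ≠ 0) (n : ℕ) :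
    v (x ^ n) = n • v x := by
  induction n with
  | zero =>
    have h := hmul 1 x one_ne_zero hx
    rw [one_mul, right_eq_add] at h
    rw [pow_zero, h, zero_smul]
  | succ n ih => rw [pow_succ, hmul _ _ (pow_ne_zero n hx) hx, ih, succ_nsmul]

/-- There is a coherent ring `R` with a multiplicative set `S` such that
`S`-flat modules are not closed under products: for a valuation domain `R` with value
group `ℤ × ℤ` (lex), `x` of value `(0,1)` and `S = {xⁱ}`, the ring `R` is coherent,
each `R/xⁱR` is `S`-flat (indeed `(R/xⁱR)_S = 0`), but `∏_{i ≥ 1} R/xⁱR` is not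
`S`-flat. -/
theorem stmt10 {R : Type*} [CommRing R] [IsDomain R] [ValuationRing R]
    (v : R → ℤ × ℤ)
    (hdvd : ∀ a b : R, a ≠ 0 → b ≠ 0 → (a ∣ b ↔ lexLe (v a) (v b)))
    (hmul : ∀ a b : R, a ≠ 0 → b ≠ 0 → v (a * b) = v a + v b)
    (x y : R) (hx : x ≠ 0) (hy : y ≠ 0)
    (hvx : v x = (0, 1)) (hvy : v y = (1, 0)) :
    (∀ I : Ideal R, I.FG → Module.FinitePresentation R I) ∧
    (∀ i : ℕ,
      Subsingleton (LocalizedModule (Submonoid.powers x) (R ⧸ Ideal.span {x ^ (i + 1)})) ∧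
      Module.Flat (Localization (Submonoid.powers x))
        (LocalizedModule (Submonoid.powers x) (R ⧸ Ideal.span {x ^ (i + 1)}))) ∧
    ¬ Module.Flat (Localization (Submonoid.powers x))
        (LocalizedModule (Submonoid.powers x) (∀ i : ℕ, R ⧸ Ideal.span {x ^ (i + 1)})) := by
  have hvpow (n : ℕ) : v (x ^ n) = (0, (n : ℤ)) := by simp [map_pow_of_map_mul hmul hx, hvx]
  refine ⟨fun _ hI => IsBezout.finitePresentation_of_fg hI, fun i => ?_, ?_⟩
  · have := LocalizedModule.subsingleton_of_smul_eq_zero (pow_mem (Submonoid.mem_powers x) (i + 1))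
      (Ideal.Quotient.span_singleton_smul_eq_zero _)
    exact ⟨this, Module.Flat.of_free⟩
  · refine LocalizedModule.not_flat_of_smul_eq_zero (powers_le_nonZeroDivisors_of_noZeroDivisors hx)
      hy (m := fun i => Ideal.Quotient.mk _ 1) ?_ ?_
    · funext i
      rw [Pi.smul_apply, Pi.zero_apply, Ideal.Quotient.smul_mk_one_eq_zero_iff,
        hdvd _ _ (pow_ne_zero _ hx) hy, hvpow, hvy]
      exact Or.inl zero_lt_one
    · rintro _ ⟨n, rfl⟩ h
      have hn : x ^ n • Ideal.Quotient.mk (Ideal.span {x ^ (n + 1)}) 1 = 0 := congrFun h n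
      rw [Ideal.Quotient.smul_mk_one_eq_zero_iff,
        hdvd _ _ (pow_ne_zero _ hx) (pow_ne_zero _ hx), hvpow, hvpow] at hn
      simp [lexLe] at hn
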